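/- Let (G, V_goal) be a planning problem with G in state-determined presentation, and let H denote the set of all homomorphic solutions to (G, V_goal). Any label map h that is destructive on H is strongly destructive on (G, V_goal); that is, if for every homomorphic solution (P, V_term) ∈ H the plan (h(P), V_term) fails to solve (h(G), V_goal), then for every solution (P, V_term) to (G, V_goal) whatsoever, (h(P), V_term) fails to solve (h(G), V_goal). -/

import Mathlib

/-! Formalization of interaction languages and procrustean graphs (p-graphs). -/

section InteractionLanguages

variable {U Y U' Y' : Type}

/-- A list of events (events are `U ⊕ Y`: actions on the left, observations on the
right) alternates kinds, the first element being an action iff `b = true`. -/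
def AltFrom : Bool → List (U ⊕ Y) → Prop
  | _, [] => True
  | b, e :: s => e.isLeft = b ∧ AltFrom (!b) s

/-- A set of event sequences is prefix-closed. -/
def PrefixClosed (L : Set (List (U ⊕ Y))) : Prop :=
  ∀ s ∈ L, ∀ t : List (U ⊕ Y), t <+: s → t ∈ L

/-- An action-first language: all members alternate starting with an action,
i.e. the language is a subset of (UY)*(U+ε). -/
def IsActionFirst (L : Set (List (U ⊕ Y))) : Prop := ∀ s ∈ L, AltFrom true s

/-- An observation-first language: subset of (YU)*(Y+ε). -/
def IsObservationFirst (L : Set (List (U ⊕ Y))) : Prop := ∀ s ∈ L, AltFrom false s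

/-- An interaction language over the event space `U ⊕ Y`. -/
def IsInteractionLang (L : Set (List (U ⊕ Y))) : Prop :=
  PrefixClosed L ∧ (IsActionFirst L ∨ IsObservationFirst L)

/-- Two languages are akin when both are action-first or both are observation-first. -/
def Akin (LA LB : Set (List (U ⊕ Y))) : Prop :=
  (IsActionFirst LA ∧ IsActionFirst LB) ∨ (IsObservationFirst LA ∧ IsObservationFirst LB)

/-- The last element of the sequence is an action. -/
def ActionTerminal (s : List (U ⊕ Y)) : Prop := ∃ u : U, s.getLast? = some (Sum.inl u)

/-- The last element of the sequence is an observation. -/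
def ObservationTerminal (s : List (U ⊕ Y)) : Prop := ∃ y : Y, s.getLast? = some (Sum.inr y)

/-- `LA` is safe on `LB`. -/
def SafeLang (LA LB : Set (List (U ⊕ Y))) : Prop :=
  ∀ s ∈ LA ∩ LB,
    (ObservationTerminal s → ∀ e : U ⊕ Y, s ++ [e] ∈ LA → s ++ [e] ∈ LB) ∧
    (ActionTerminal s → ∀ e : U ⊕ Y, s ++ [e] ∈ LB → s ++ [e] ∈ LA)

/-- `LA` is finite on `LB`: the lengths of joint sequences are bounded. -/
def FiniteOn (LA LB : Set (List (U ⊕ Y))) : Prop :=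
  ∃ k : ℕ, ∀ s ∈ LA ∩ LB, s.length ≤ k

end InteractionLanguages

/-- A procrustean graph (p-graph) over action space `U` and observation space `Y`:
a finite edge-labeled bipartite directed graph; `label v w` is the set of events
labeling the edge from `v` to `w` (the empty set meaning there is no such edge). -/
structure PGraph (U Y : Type) where
  /-- The (finite) vertex type. -/
  V : Type
  /-- The vertex set is finite. -/
  [finV : Fintype V]
  /-- `true` on action vertices, `false` on observation vertices. -/
  isAct : V → Bool
  /-- Edge labels. -/
  label : V → V → Set (U ⊕ Y)
  /-- Edges from action vertices are labeled by actions and lead to observation vertices. -/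
  act_ok : ∀ v w : V, ∀ e ∈ label v w, isAct v = true → e.isLeft = true ∧ isAct w = false
  /-- Edges from observation vertices are labeled by observations and lead to action vertices. -/
  obs_ok : ∀ v w : V, ∀ e ∈ label v w, isAct v = false → e.isRight = true ∧ isAct w = true
  /-- The set of initial states. -/
  V0 : Set V
  V0_nonempty : V0.Nonempty
  /-- Whether the initial states are action vertices. -/
  startAct : Bool
  /-- Initial states are exclusively action states or exclusively observation states. -/
  V0_uniform : ∀ v ∈ V0, isAct v = startAct

attribute [instance] PGraph.finV

namespace PGraph

variable {U Y U' Y' : Type}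

/-- The event sequence `s` transitions in `G` from `v` to `w`. -/
inductive Trans (G : PGraph U Y) : G.V → List (U ⊕ Y) → G.V → Prop
  | nil (v : G.V) : Trans G v [] v
  | cons {v w x : G.V} {e : U ⊕ Y} {s : List (U ⊕ Y)} :
      e ∈ G.label v w → Trans G w s x → Trans G v (e :: s) x

/-- The induced language of a p-graph: the set of its executions. -/
def lang (G : PGraph U Y) : Set (List (U ⊕ Y)) :=
  {s | ∃ v ∈ G.V0, ∃ w, G.Trans v s w}

/-- A vertex reached by some execution. -/
def Reached (G : PGraph U Y) (w : G.V) : Prop :=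
  ∃ s : List (U ⊕ Y), ∃ v ∈ G.V0, G.Trans v s w

/-- A p-graph is in state-determined presentation: a unique initial state and,
at every vertex, labels of distinct outgoing edges pairwise disjoint. -/
def StateDetermined (G : PGraph U Y) : Prop :=
  (∃ v : G.V, G.V0 = {v}) ∧
  ∀ v w w' : G.V, w ≠ w' → G.label v w ∩ G.label v w' = ∅

/-- A p-graph is single-outputting: every action vertex reached by some execution
has at most one outgoing edge, and that edge's label is a singleton (action) set. -/
def SingleOutputting (G : PGraph U Y) : Prop :=
  ∀ v : G.V, G.isAct v = true → G.Reached v →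
    (∀ w w' : G.V, (G.label v w).Nonempty → (G.label v w').Nonempty → w = w') ∧
    (∀ w : G.V, (G.label v w).Nonempty → ∃ u : U, G.label v w = {Sum.inl u})

/-- A deterministic filter: every observation-terminal sequence of the induced
language has at most one successor in the language. -/
def DeterministicFilter (F : PGraph U Y) : Prop :=
  ∀ s ∈ F.lang, ObservationTerminal s →
    ∀ e e' : U ⊕ Y, s ++ [e] ∈ F.lang → s ++ [e'] ∈ F.lang → e = e'

/-- `IsTrace G v s l`: starting at `v`, the event sequence `s` can be traced along
the sequence of vertices `l` (which begins with `v`). -/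
inductive IsTrace (G : PGraph U Y) : G.V → List (U ⊕ Y) → List G.V → Prop
  | nil (v : G.V) : IsTrace G v [] [v]
  | cons {v w : G.V} {e : U ⊕ Y} {s : List (U ⊕ Y)} {l : List G.V} :
      e ∈ G.label v w → IsTrace G w s l → IsTrace G v (e :: s) (v :: l)

/-- A practicable filter: a single-outputting p-graph in which the validity of every
sequence of the induced language is the consequence of exactly one sequence of
state transitions. -/
def Practicable (F : PGraph U Y) : Prop :=
  F.SingleOutputting ∧
  ∀ s ∈ F.lang, ∃! l : List F.V, ∃ v0 ∈ F.V0, F.IsTrace v0 s l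

/-- `P` is safe on `W` (as p-graphs). -/
def SafeOn (P W : PGraph U Y) : Prop := SafeLang P.lang W.lang

/-- The event sequence `s` transitions in `P` from some initial state to some vertex
of the region `T`. -/
def ReachesVia (P : PGraph U Y) (T : Set P.V) (s : List (U ⊕ Y)) : Prop :=
  ∃ v0 ∈ P.V0, ∃ v ∈ T, P.Trans v0 s v

/-- The plan `(P, Pterm)` solves the planning problem `(W, Vgoal)`. -/
def Solves (P : PGraph U Y) (Pterm : Set P.V) (W : PGraph U Y) (Vgoal : Set W.V) : Prop :=
  Akin P.lang W.lang ∧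
  FiniteOn P.lang W.lang ∧
  SafeLang P.lang W.lang ∧
  (∀ s ∈ P.lang ∩ W.lang,
    ReachesVia P Pterm s ∨ ∃ t ∈ P.lang ∩ W.lang, s <+: t ∧ ReachesVia P Pterm t) ∧
  (∀ s ∈ P.lang ∩ W.lang, ReachesVia P Pterm s →
    ∀ w0 ∈ W.V0, ∀ w : W.V, W.Trans w0 s w → w ∈ Vgoal)

/-- The relation `R ⊆ V(P) × V(W)` relating `v` and `w` when some joint-execution
transitions in `P` from an initial state to `v` and in `W` from an initial state to `w`. -/
def HomRel (P W : PGraph U Y) (v : P.V) (w : W.V) : Prop :=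
  ∃ s ∈ P.lang ∩ W.lang, (∃ v0 ∈ P.V0, P.Trans v0 s v) ∧ (∃ w0 ∈ W.V0, W.Trans w0 s w)

/-- A homomorphic solution: a solution for which the relation `HomRel` is a function. -/
def HomomorphicSolution (P : PGraph U Y) (Pterm : Set P.V) (W : PGraph U Y)
    (Vgoal : Set W.V) : Prop :=
  Solves P Pterm W Vgoal ∧
  ∀ (v : P.V) (w w' : W.V), HomRel P W v w → HomRel P W v w' → w = w'

/-- The union `P ⊎ Q` of two p-graphs (whose initial states are of matching kind). -/
def union (P Q : PGraph U Y) (h : P.startAct = Q.startAct) : PGraph U Y where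
  V := P.V ⊕ Q.V
  isAct := Sum.elim P.isAct Q.isAct
  label := fun v w =>
    match v, w with
    | Sum.inl a, Sum.inl b => P.label a b
    | Sum.inr a, Sum.inr b => Q.label a b
    | _, _ => ∅
  act_ok := by
    rintro (a | a) (b | b) e he hv
    · exact P.act_ok a b e he hv
    · exact absurd he (Set.notMem_empty e)
    · exact absurd he (Set.notMem_empty e)
    · exact Q.act_ok a b e he hv
  obs_ok := by
    rintro (a | a) (b | b) e he hv
    · exact P.obs_ok a b e he hv
    · exact absurd he (Set.notMem_empty e)
    · exact absurd he (Set.notMem_empty e)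
    · exact Q.obs_ok a b e he hv
  V0 := Sum.inl '' P.V0 ∪ Sum.inr '' Q.V0
  V0_nonempty := by
    obtain ⟨v, hv⟩ := P.V0_nonempty
    exact ⟨Sum.inl v, Or.inl ⟨v, hv, rfl⟩⟩
  startAct := P.startAct
  V0_uniform := by
    rintro v (⟨a, ha, rfl⟩ | ⟨a, ha, rfl⟩)
    · exact P.V0_uniform a ha
    · exact (Q.V0_uniform a ha).trans h.symm

/-- The set of states reached in `P` from some initial state by the event sequence `s`. -/
def reachSet (P : PGraph U Y) (s : List (U ⊕ Y)) : Set P.V :=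
  {w | ∃ v0 ∈ P.V0, P.Trans v0 s w}

lemma trans_nil_eq {P : PGraph U Y} {v w : P.V} (h : P.Trans v [] w) : w = v := by
  cases h; rfl

lemma edge_flips {P : PGraph U Y} {v w : P.V} {e : U ⊕ Y} (he : e ∈ P.label v w) :
    P.isAct w = !P.isAct v := by
  cases hv : P.isAct v
  · simpa using (P.obs_ok v w e he hv).2
  · simpa using (P.act_ok v w e he hv).2

lemma trans_parity {P : PGraph U Y} {v w : P.V} {s : List (U ⊕ Y)}
    (h : P.Trans v s w) : P.isAct w = Bool.xor (P.isAct v) (decide (s.length % 2 = 1)) := by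
  induction h with
  | nil v => simp
  | cons he _ ih =>
    rename_i v' w' x' e s' _
    rw [ih, edge_flips he]
    rcases Nat.even_or_odd s'.length with hp | hp <;>
      rcases hb : P.isAct v' <;>
      simp_all [Nat.even_iff, Nat.odd_iff, List.length_cons, Nat.succ_mod_two_eq_one_iff,
        Nat.succ_mod_two_eq_zero_iff]
  
lemma reachSet_homog {P : PGraph U Y} {s : List (U ⊕ Y)} {v w : P.V}
    (hv : v ∈ P.reachSet s) (hw : w ∈ P.reachSet s) : P.isAct v = P.isAct w := by
  obtain ⟨v0, hv0, hv⟩ := hv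
  obtain ⟨w0, hw0, hw⟩ := hw
  rw [trans_parity hv, trans_parity hw, P.V0_uniform v0 hv0, P.V0_uniform w0 hw0]

lemma trans_append {P : PGraph U Y} {v x : P.V} {s t : List (U ⊕ Y)}
    (h : P.Trans v (s ++ t) x) : ∃ m : P.V, P.Trans v s m ∧ P.Trans m t x := by
  induction s generalizing v with
  | nil => exact ⟨v, Trans.nil v, h⟩
  | cons e s ih =>
    cases h with
    | cons he h' =>
      obtain ⟨m, h1, h2⟩ := ih h'
      exact ⟨m, Trans.cons he h1, h2⟩

lemma trans_single {P : PGraph U Y} {v x : P.V} {e : U ⊕ Y}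
    (h : P.Trans v [e] x) : e ∈ P.label v x := by
  cases h with
  | cons he h' =>
    rw [trans_nil_eq h']
    exact he

/-- The powerset determinization of a p-graph `P`: vertices are the subsets of
`V(P)` of the form `S(s) = reachSet P s` for `s ∈ L(P)`, the single initial state is
`S(ε) = V0(P)`, and the label of the edge from `S` to `T` contains `e` exactly when
`S = S(s)`, `T = S(s·e)` for some `s` with `s, s·e ∈ L(P)`. -/
noncomputable def determinize (P : PGraph U Y) : PGraph U Y where
  V := {S : Set P.V // ∃ s ∈ P.lang, P.reachSet s = S}
  finV := Fintype.ofFinite _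
  isAct := fun S => by classical exact decide (∃ v ∈ S.1, P.isAct v = true)
  label := fun S T =>
    {e | ∃ s ∈ P.lang, P.reachSet s = S.1 ∧ s ++ [e] ∈ P.lang ∧ P.reachSet (s ++ [e]) = T.1}
  act_ok := by
    classical
    rintro S T e ⟨s, hs, hS, hse, hT⟩ hv
    rw [decide_eq_true_iff] at hv
    obtain ⟨v, hvS, hvAct⟩ := hv
    obtain ⟨v0, hv0, x, hx⟩ := hse
    obtain ⟨m, hm, hmx⟩ := trans_append hx
    have hmS : m ∈ P.reachSet s := ⟨v0, hv0, hm⟩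
    have hedge : e ∈ P.label m x := trans_single hmx
    have hmAct : P.isAct m = true := by
      rw [← hS] at hvS
      rw [reachSet_homog hmS hvS, hvAct]
    obtain ⟨hL, hxA⟩ := P.act_ok m x e hedge hmAct
    refine ⟨hL, ?_⟩
    rw [decide_eq_false_iff_not]
    rintro ⟨w, hwT, hwAct⟩
    rw [← hT] at hwT
    have hxT : x ∈ P.reachSet (s ++ [e]) := ⟨v0, hv0, hx⟩
    rw [reachSet_homog hwT hxT, hxA] at hwAct
    exact Bool.false_ne_true hwAct
  obs_ok := by
    classical
    rintro S T e ⟨s, hs, hS, hse, hT⟩ hv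
    rw [decide_eq_false_iff_not] at hv
    obtain ⟨v0, hv0, x, hx⟩ := hse
    obtain ⟨m, hm, hmx⟩ := trans_append hx
    have hmS : m ∈ P.reachSet s := ⟨v0, hv0, hm⟩
    have hedge : e ∈ P.label m x := trans_single hmx
    have hmObs : P.isAct m = false := by
      rcases hma : P.isAct m with _ | _
      · rfl
      · exact absurd ⟨m, by rwa [hS] at hmS, hma⟩ hv
    obtain ⟨hR, hxA⟩ := P.obs_ok m x e hedge hmObs
    refine ⟨hR, ?_⟩
    rw [decide_eq_true_iff]
    refine ⟨x, ?_, hxA⟩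
    rw [← hT]
    exact ⟨v0, hv0, hx⟩
  V0 := {⟨P.reachSet [],
    ⟨[], ⟨P.V0_nonempty.choose, P.V0_nonempty.choose_spec,
      P.V0_nonempty.choose, Trans.nil _⟩, rfl⟩⟩}
  V0_nonempty := ⟨_, rfl⟩
  startAct := P.startAct
  V0_uniform := by
    classical
    rintro S hS
    rw [Set.mem_singleton_iff] at hS
    subst hS
    rcases hsa : P.startAct with _ | _
    · rw [decide_eq_false_iff_not]
      rintro ⟨v, ⟨v0, hv0, hv⟩, hvAct⟩
      rw [trans_nil_eq hv] at hvAct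
      rw [P.V0_uniform v0 hv0, hsa] at hvAct
      exact Bool.false_ne_true hvAct
    · rw [decide_eq_true_iff]
      obtain ⟨v, hv⟩ := P.V0_nonempty
      exact ⟨v, ⟨v, hv, Trans.nil v⟩, by rw [P.V0_uniform v hv, hsa]⟩

end PGraph
section Maps

variable {U Y U' Y' : Type}

/-- A label map: an action map together with an observation map, each assigning a
nonempty set of new events to each event. -/
structure LabelMap (U Y U' Y' : Type) where
  actMap : U → Set U'
  obsMap : Y → Set Y'
  actMap_nonempty : ∀ u : U, (actMap u).Nonempty
  obsMap_nonempty : ∀ y : Y, (obsMap y).Nonempty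

/-- Action of a label map on a single event. -/
def LabelMap.event (h : LabelMap U Y U' Y') : U ⊕ Y → Set (U' ⊕ Y')
  | Sum.inl u => Sum.inl '' h.actMap u
  | Sum.inr y => Sum.inr '' h.obsMap y

/-- Extension of a label map to sets of events: `h(S) = ⋃_{e ∈ S} h(e)`. -/
def LabelMap.setImage (h : LabelMap U Y U' Y') (S : Set (U ⊕ Y)) : Set (U' ⊕ Y') :=
  ⋃ e ∈ S, h.event e

/-- Extension of a label map to p-graphs: replace each edge label `S` with `h(S)`. -/
def PGraph.applyMap (h : LabelMap U Y U' Y') (G : PGraph U Y) : PGraph U' Y' where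
  V := G.V
  isAct := G.isAct
  label := fun v w => h.setImage (G.label v w)
  act_ok := by
    intro v w e' he' hv
    simp only [LabelMap.setImage, Set.mem_iUnion, exists_prop] at he'
    obtain ⟨e, he, hmem⟩ := he'
    have h1 := G.act_ok v w e he hv
    refine ⟨?_, h1.2⟩
    cases e with
    | inl u =>
      simp only [LabelMap.event] at hmem
      obtain ⟨u', _, rfl⟩ := hmem
      rfl
    | inr y => simp at h1
  obs_ok := by
    intro v w e' he' hv
    simp only [LabelMap.setImage, Set.mem_iUnion, exists_prop] at he'
    obtain ⟨e, he, hmem⟩ := he'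
    have h1 := G.obs_ok v w e he hv
    refine ⟨?_, h1.2⟩
    cases e with
    | inl u => simp at h1
    | inr y =>
      simp only [LabelMap.event] at hmem
      obtain ⟨y', _, rfl⟩ := hmem
      rfl
  V0 := G.V0
  V0_nonempty := G.V0_nonempty
  startAct := G.startAct
  V0_uniform := G.V0_uniform

/-- Action of an observation map on a single event (actions are left unchanged). -/
def obsEventImage (h : Y → Set Y') : U ⊕ Y → Set (U ⊕ Y')
  | Sum.inl u => {Sum.inl u}
  | Sum.inr y => Sum.inr '' h y

/-- `h_y(F)`: the p-graph `F` with each observation edge label `S` replaced by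
`⋃_{y ∈ S} h_y(y)` (action labels unchanged). -/
def PGraph.mapObs (G : PGraph U Y) (h : Y → Set Y') : PGraph U Y' where
  V := G.V
  isAct := G.isAct
  label := fun v w => ⋃ e ∈ G.label v w, obsEventImage h e
  act_ok := by
    intro v w e' he' hv
    simp only [Set.mem_iUnion, exists_prop] at he'
    obtain ⟨e, he, hmem⟩ := he'
    have h1 := G.act_ok v w e he hv
    refine ⟨?_, h1.2⟩
    cases e with
    | inl u =>
      simp only [obsEventImage, Set.mem_singleton_iff] at hmem
      subst hmem
      rfl
    | inr y => simp at h1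
  obs_ok := by
    intro v w e' he' hv
    simp only [Set.mem_iUnion, exists_prop] at he'
    obtain ⟨e, he, hmem⟩ := he'
    have h1 := G.obs_ok v w e he hv
    refine ⟨?_, h1.2⟩
    cases e with
    | inl u => simp at h1
    | inr y =>
      simp only [obsEventImage] at hmem
      obtain ⟨y', _, rfl⟩ := hmem
      rfl
  V0 := G.V0
  V0_nonempty := G.V0_nonempty
  startAct := G.startAct
  V0_uniform := G.V0_uniform

/-- `corrEvent h e f` holds when `f ∈ h_y(e)` for observations and `f = e` for actions. -/
def corrEvent (h : Y → Set Y') : U ⊕ Y → U ⊕ Y' → Prop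
  | Sum.inl u, Sum.inl u' => u' = u
  | Sum.inr y, Sum.inr y' => y' ∈ h y
  | _, _ => False

/-- `F` is equivalent to `F'` modulo the observation map `h`. -/
def EquivMod (F : PGraph U Y) (F' : PGraph U Y') (h : Y → Set Y') : Prop :=
  ∀ s ∈ F.lang, ObservationTerminal s →
    {u : U | s ++ [Sum.inl u] ∈ F.lang} =
      {u : U | ∃ t : List (U ⊕ Y'),
        List.Forall₂ (corrEvent h) s t ∧ t ++ [Sum.inl u] ∈ F'.lang}

/-- The observation map `h` is non-destructive on `F`. -/
def ObsNonDestructive (F : PGraph U Y) (h : Y → Set Y') : Prop :=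
  EquivMod F (F.mapObs h) h

end Maps

/-! Every solution `P` of `(G, Vgoal)` can be replaced by its product with `G`, where `G` is
completed by a sink state absorbing the events it cannot perform. The product has the same
executions as `P` and reaches its terminal region on the same ones, so it solves the same
problems as `P`, and so does its image under any label map, since a label map acts on a plan
only through these two data. When `G` is state-determined, the `G`-component of a product
state is the only `G`-state reachable by a joint execution leading to it, so the product is
a homomorphic solution. -/

variable {U Y U' Y' : Type}

def LabelMap.IsRelabeling (h : LabelMap U Y U' Y') (s : List (U ⊕ Y))
    (t : List (U' ⊕ Y')) : Prop :=
  List.Forall₂ (fun e f => f ∈ h.event e) s t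

namespace PGraph

lemma solves_congr {A B W : PGraph U Y} {Ta : Set A.V} {Tb : Set B.V} {Vgoal : Set W.V}
    (hl : A.lang = B.lang) (hr : A.ReachesVia Ta = B.ReachesVia Tb) :
    A.Solves Ta W Vgoal ↔ B.Solves Tb W Vgoal := by
  unfold Solves
  rw [hl, hr]

section ApplyMap

variable {h : LabelMap U Y U' Y'} {A : PGraph U Y}

lemma Trans.applyMap {v w : A.V} {s : List (U ⊕ Y)} {t : List (U' ⊕ Y')}
    (hs : A.Trans v s w) (hst : h.IsRelabeling s t) : (A.applyMap h).Trans v t w := by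
  induction hs generalizing t with
  | nil v => cases hst; exact Trans.nil (G := A.applyMap h) v
  | cons he _ ih =>
    cases hst with
    | cons hf hst => exact Trans.cons (G := A.applyMap h) (Set.mem_biUnion he hf) (ih hst)

lemma exists_isRelabeling_of_trans_applyMap {v w : (A.applyMap h).V} {t : List (U' ⊕ Y')}
    (ht : (A.applyMap h).Trans v t w) : ∃ s, h.IsRelabeling s t ∧ A.Trans v s w := by
  induction ht with
  | nil v => exact ⟨[], List.Forall₂.nil, Trans.nil (G := A) v⟩
  | cons hf _ ih =>
    obtain ⟨s, hst, hs⟩ := ih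
    obtain ⟨e, he, hfe⟩ := Set.mem_iUnion₂.mp hf
    exact ⟨e :: s, List.Forall₂.cons hfe hst, Trans.cons he hs⟩

lemma lang_applyMap : (A.applyMap h).lang = {t | ∃ s ∈ A.lang, h.IsRelabeling s t} := by
  ext t
  constructor
  · rintro ⟨v0, hv0, w, ht⟩
    obtain ⟨s, hst, hs⟩ := exists_isRelabeling_of_trans_applyMap ht
    exact ⟨s, ⟨v0, hv0, w, hs⟩, hst⟩
  · rintro ⟨s, ⟨v0, hv0, w, hs⟩, hst⟩
    exact ⟨v0, hv0, w, hs.applyMap hst⟩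

lemma reachesVia_applyMap (T : Set A.V) (t : List (U' ⊕ Y')) :
    (A.applyMap h).ReachesVia T t ↔ ∃ s, h.IsRelabeling s t ∧ A.ReachesVia T s := by
  constructor
  · rintro ⟨v0, hv0, v, hvT, ht⟩
    obtain ⟨s, hst, hs⟩ := exists_isRelabeling_of_trans_applyMap ht
    exact ⟨s, hst, v0, hv0, v, hvT, hs⟩
  · rintro ⟨s, hst, v0, hv0, v, hvT, hs⟩
    exact ⟨v0, hv0, v, hvT, hs.applyMap hst⟩

lemma solves_applyMap_congr (h : LabelMap U Y U' Y') {A B W : PGraph U Y} {Ta : Set A.V}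
    {Tb : Set B.V} {Vgoal : Set W.V} (hl : A.lang = B.lang)
    (hr : A.ReachesVia Ta = B.ReachesVia Tb) :
    (A.applyMap h).Solves Ta (W.applyMap h) Vgoal ↔
      (B.applyMap h).Solves Tb (W.applyMap h) Vgoal := by
  refine solves_congr ?_ ?_
  · rw [lang_applyMap, lang_applyMap, hl]
  · funext t
    rw [reachesVia_applyMap, reachesVia_applyMap, hr]

end ApplyMap

section Track

variable {P G : PGraph U Y}

def completedLabel (G : PGraph U Y) : Option G.V → Option G.V → Set (U ⊕ Y)
  | some g, some g' => G.label g g'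
  | some g, none => {e | ∀ g', e ∉ G.label g g'}
  | none, none => Set.univ
  | none, some _ => ∅

lemma exists_mem_completedLabel (x : Option G.V) (e : U ⊕ Y) :
    ∃ y, e ∈ G.completedLabel x y := by
  classical
  rcases x with _ | g
  · exact ⟨none, Set.mem_univ e⟩
  · by_cases he : ∃ g', e ∈ G.label g g'
    · obtain ⟨g', he⟩ := he
      exact ⟨some g', he⟩
    · exact ⟨none, fun g' hg' => he ⟨g', hg'⟩⟩

def track (P G : PGraph U Y) : PGraph U Y where
  V := P.V × Option G.V
  isAct v := P.isAct v.1
  label v w := P.label v.1 w.1 ∩ G.completedLabel v.2 w.2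
  act_ok v w e he := P.act_ok v.1 w.1 e he.1
  obs_ok v w e he := P.obs_ok v.1 w.1 e he.1
  V0 := P.V0 ×ˢ (some '' G.V0)
  V0_nonempty := P.V0_nonempty.prod (G.V0_nonempty.image some)
  startAct := P.startAct
  V0_uniform v hv := P.V0_uniform v.1 hv.1

lemma Trans.fst_track {v w : (P.track G).V} {s : List (U ⊕ Y)}
    (hs : (P.track G).Trans v s w) : P.Trans v.1 s w.1 := by
  induction hs with
  | nil v => exact Trans.nil v.1
  | cons he _ ih => exact Trans.cons he.1 ih

lemma Trans.exists_track {p0 p : P.V} {s : List (U ⊕ Y)} (hs : P.Trans p0 s p)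
    (x0 : Option G.V) : ∃ x, (P.track G).Trans (p0, x0) s (p, x) := by
  induction hs generalizing x0 with
  | nil p => exact ⟨x0, Trans.nil _⟩
  | @cons _ _ _ e _ he _ ih =>
    obtain ⟨x1, hx1⟩ := exists_mem_completedLabel x0 e
    obtain ⟨x, hx⟩ := ih x1
    exact ⟨x, Trans.cons (G := P.track G) ⟨he, hx1⟩ hx⟩

lemma lang_track : (P.track G).lang = P.lang := by
  ext s
  constructor
  · rintro ⟨v0, hv0, w, hs⟩
    exact ⟨v0.1, hv0.1, w.1, hs.fst_track⟩
  · rintro ⟨p0, hp0, p, hs⟩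
    obtain ⟨g0, hg0⟩ := G.V0_nonempty
    obtain ⟨x, hx⟩ := hs.exists_track (some g0)
    exact ⟨(p0, some g0), ⟨hp0, g0, hg0, rfl⟩, (p, x), hx⟩

lemma reachesVia_track (T : Set P.V) :
    (P.track G).ReachesVia (Prod.fst ⁻¹' T) = P.ReachesVia T := by
  funext s
  apply propext
  constructor
  · rintro ⟨v0, hv0, v, hvT, hs⟩
    exact ⟨v0.1, hv0.1, v.1, hvT, hs.fst_track⟩
  · rintro ⟨p0, hp0, p, hpT, hs⟩
    obtain ⟨g0, hg0⟩ := G.V0_nonempty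
    obtain ⟨x, hx⟩ := hs.exists_track (some g0)
    exact ⟨(p0, some g0), ⟨hp0, g0, hg0, rfl⟩, (p, x), hpT, hx⟩

lemma Trans.snd_track_eq
    (hdisj : ∀ v w w' : G.V, w ≠ w' → G.label v w ∩ G.label v w' = ∅)
    {v x : (P.track G).V} {s : List (U ⊕ Y)} (hs : (P.track G).Trans v s x)
    {g0 w : G.V} (hv : v.2 = some g0) (hg : G.Trans g0 s w) : x.2 = some w := by
  induction hs generalizing g0 with
  | nil => cases hg; exact hv
  | @cons v y _ e _ he _ ih =>
    obtain ⟨⟩ | ⟨hge, hg⟩ := hg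
    have he' : e ∈ G.completedLabel (some g0) y.2 := hv ▸ he.2
    obtain ⟨p, _ | g⟩ := y
    · exact absurd hge (he' _)
    · refine ih (by_contra fun hne => ?_) hg
      have hne' : g ≠ _ := fun heq => hne (congrArg some heq)
      exact Set.notMem_empty e (hdisj g0 g _ hne' ▸ ⟨he', hge⟩)

lemma snd_eq_of_homRel_track (hG : G.StateDetermined) {v : (P.track G).V} {w : G.V}
    (hvw : HomRel (P.track G) G v w) : v.2 = some w := by
  obtain ⟨g, hg⟩ := hG.1
  obtain ⟨s, _, ⟨v0, ⟨_, g0, hg0, hv0⟩, hs⟩, ⟨w0, hw0, hw⟩⟩ := hvw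
  rw [hg, Set.mem_singleton_iff] at hg0 hw0
  exact hs.snd_track_eq hG.2 hv0.symm (hg0 ▸ hw0 ▸ hw)

lemma homomorphicSolution_track (hG : G.StateDetermined) {Pterm : Set P.V}
    {Vgoal : Set G.V} (hP : P.Solves Pterm G Vgoal) :
    (P.track G).HomomorphicSolution (Prod.fst ⁻¹' Pterm) G Vgoal :=
  ⟨(solves_congr lang_track (reachesVia_track Pterm)).2 hP, fun _ _ _ hw hw' =>
    Option.some.inj ((snd_eq_of_homRel_track hG hw).symm.trans (snd_eq_of_homRel_track hG hw'))⟩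

end Track

end PGraph

theorem extensive_destructiveness_general
    {U Y U' Y' : Type}
    (G : PGraph U Y) (Vgoal : Set G.V) (hG : G.StateDetermined)
    (h : LabelMap U Y U' Y')
    (hdest : ∀ (P : PGraph U Y) (Pterm : Set P.V),
      PGraph.HomomorphicSolution P Pterm G Vgoal →
        ¬ PGraph.Solves (PGraph.applyMap h P) Pterm (PGraph.applyMap h G) Vgoal) :
    ∀ (P : PGraph U Y) (Pterm : Set P.V),
      PGraph.Solves P Pterm G Vgoal →
        ¬ PGraph.Solves (PGraph.applyMap h P) Pterm (PGraph.applyMap h G) Vgoal := by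
  intro P Pterm hP hhP
  refine hdest (P.track G) _ (PGraph.homomorphicSolution_track hG hP) ?_
  exact (PGraph.solves_applyMap_congr h PGraph.lang_track (PGraph.reachesVia_track Pterm)).2 hhP

/-- extensive destructiveness: for a state-determined planning problem
`(G, Vgoal)`, any label map that is destructive on the set of homomorphic solutions
is strongly destructive (destructive on all solutions). -/
theorem extensive_destructiveness
    {U Y U' Y' : Type} [Nonempty U] [Nonempty Y] [Nonempty U'] [Nonempty Y']
    (G : PGraph U Y) (Vgoal : Set G.V) (hG : G.StateDetermined)
    (h : LabelMap U Y U' Y')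
    (hdest : ∀ (P : PGraph U Y) (Pterm : Set P.V),
      PGraph.HomomorphicSolution P Pterm G Vgoal →
        ¬ PGraph.Solves (PGraph.applyMap h P) Pterm (PGraph.applyMap h G) Vgoal) :
    ∀ (P : PGraph U Y) (Pterm : Set P.V),
      PGraph.Solves P Pterm G Vgoal →
        ¬ PGraph.Solves (PGraph.applyMap h P) Pterm (PGraph.applyMap h G) Vgoal :=
  extensive_destructiveness_general G Vgoal hG h hdest
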